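/- arXiv:2605.24400 — 3 statements merged into one kernel-verified Lean document; each statement's English description precedes it below -/
import Mathlib

section
/- Let μ be the measure on ℝ^{n+1} obtained as the pushforward under Φ(r,ω) = (sinh r, (cosh r)·ω) of the measure (cosh r)^{n-1} dr dω on ℝ × S^{n-1}. Then μ is invariant under every linear isometry of the Minkowski form: for every linear map g : ℝ^{n+1} → ℝ^{n+1} satisfying B(gx, gy) = B(x,y) for all x,y, the pushforward of μ under g equals μ. -/
open MeasureTheory Real Metric

noncomputable section

/-- The Minkowski bilinear form on `ℝ^{n+1} = ℝ × ℝⁿ`: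
`B(x,y) = -x₀y₀ + x₁y₁ + ⋯ + xₙyₙ`. -/
def minkB {n : ℕ} (x y : ℝ × EuclideanSpace ℝ (Fin n)) : ℝ :=
  -(x.1 * y.1) + inner ℝ x.2 y.2

/-- The hyperboloid model of hyperbolic `n`-space:
`Iⁿ = {x : B(x,x) = -1, x₀ > 0}`. -/
def hypI (n : ℕ) : Set (ℝ × EuclideanSpace ℝ (Fin n)) :=
  {x | minkB x x = -1 ∧ 0 < x.1}

/-- The parametrization `Φ(r,ω) = (sinh r, (cosh r)·ω)` of de Sitter space by `ℝ × S^{n-1}`. -/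
def dSParam (n : ℕ) (p : ℝ × sphere (0 : EuclideanSpace ℝ (Fin n)) 1) :
    ℝ × EuclideanSpace ℝ (Fin n) :=
  (Real.sinh p.1, Real.cosh p.1 • (p.2 : EuclideanSpace ℝ (Fin n)))

/-- The measure `μ` on `ℝ^{n+1}`: the pushforward under `Φ(r,ω) = (sinh r, (cosh r)·ω)` of
the measure `(cosh r)^{n-1} dr dω` on `ℝ × S^{n-1}`, where `dr` is Lebesgue measure and `dω`
is the standard spherical measure on the unit sphere `S^{n-1} ⊆ ℝⁿ`. -/
def wallMeasure (n : ℕ) : Measure (ℝ × EuclideanSpace ℝ (Fin n)) :=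
  Measure.map (dSParam n)
    (((volume : Measure ℝ).withDensity
        (fun r => ENNReal.ofReal (Real.cosh r ^ (n - 1)))).prod
      ((volume : Measure (EuclideanSpace ℝ (Fin n))).toSphere))

/-!
Under `x = s • u` with `u` in de Sitter space and `s > 0`, Lebesgue measure on the spacelike
region `{B(x,x) > 0}` disintegrates as `μ ⊗ sⁿ ds`: this is polar coordinates `v = t • ω` in `ℝⁿ`
followed by hyperbolic polar coordinates `(a, t) = s • (sinh r, cosh r)` on the wedge
`|a| < t`, whose Jacobian `s` turns `tⁿ⁻¹ da dt` into `sⁿ coshⁿ⁻¹ r dr ds`. Consequently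
`μ(A) = (n + 1) · vol {s • u | u ∈ A, 0 < s ≤ 1}`. A linear isometry `g` of `B` has
`det g = ±1`, so it preserves Lebesgue measure, and it maps the cone over `A` onto the cone
over `g A`.
-/

open Set
open scoped ENNReal

theorem LinearMap.BilinForm.Nondegenerate.det_sq_eq_one {K V : Type*} [Field K] [AddCommGroup V]
    [Module K V] [FiniteDimensional K V] {B : LinearMap.BilinForm K V} (hB : B.Nondegenerate)
    {g : V →ₗ[K] V} (hg : ∀ x y, B (g x) (g y) = B x y) : LinearMap.det g ^ 2 = 1 := by
  let b := Module.finBasis K V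
  have hBg : B.compl₁₂ g g = B := LinearMap.ext₂ hg
  have key := congrArg Matrix.det (congrArg (LinearMap.toMatrix₂ b b) hBg)
  rw [LinearMap.toMatrix₂_compl₁₂ b b, Matrix.det_mul, Matrix.det_mul, Matrix.det_transpose,
    LinearMap.det_toMatrix] at key
  have hdet : (LinearMap.toMatrix₂ b b B).det ≠ 0 :=
    (LinearMap.BilinForm.nondegenerate_iff_det_ne_zero b).1 hB
  exact mul_right_cancel₀ hdet (by linear_combination key)

theorem MeasureTheory.Measure.map_linearMap_addHaar_of_det_sq_eq_one {E : Type*}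
    [NormedAddCommGroup E] [NormedSpace ℝ E] [MeasurableSpace E] [BorelSpace E]
    [FiniteDimensional ℝ E] (μ : Measure E) [μ.IsAddHaarMeasure] {g : E →ₗ[ℝ] E}
    (hg : LinearMap.det g ^ 2 = 1) : Measure.map g μ = μ := by
  have habs : |LinearMap.det g| = 1 :=
    (pow_eq_one_iff_of_nonneg (abs_nonneg _) two_ne_zero).1 (by rw [sq_abs, hg])
  rw [Measure.map_linearMap_addHaar_eq_smul_addHaar μ (by simp [← abs_ne_zero, habs]), abs_inv,
    habs]
  simp

theorem MeasureTheory.lintegral_eq_lintegral_toSphere_lintegral_Ioi {E : Type*}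
    [NormedAddCommGroup E] [NormedSpace ℝ E] [MeasurableSpace E] [BorelSpace E]
    [FiniteDimensional ℝ E] [Nontrivial E] (μ : Measure E) [μ.IsAddHaarMeasure]
    {f : E → ℝ≥0∞} (hf : Measurable f) :
    ∫⁻ x, f x ∂μ = ∫⁻ ω, ∫⁻ t in Ioi (0 : ℝ),
      ENNReal.ofReal (t ^ (Module.finrank ℝ E - 1)) * f (t • (ω : E)) ∂volume ∂μ.toSphere := by
  have hpolar := μ.measurePreserving_homeomorphUnitSphereProd
  have hfpolar : Measurable fun p : sphere (0 : E) 1 × Ioi (0 : ℝ) => f ((p.2 : ℝ) • (p.1 : E)) :=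
    hf.comp ((measurable_subtype_coe.comp measurable_snd).smul
      (measurable_subtype_coe.comp measurable_fst))
  calc ∫⁻ x, f x ∂μ
      = ∫⁻ x : ({0}ᶜ : Set E), f x ∂μ.comap (↑) := by
        rw [lintegral_subtype_comap (measurableSet_singleton 0).compl, restrict_compl_singleton]
    _ = ∫⁻ p : sphere (0 : E) 1 × Ioi (0 : ℝ), f ((p.2 : ℝ) • (p.1 : E))
          ∂μ.toSphere.prod (Measure.volumeIoiPow (Module.finrank ℝ E - 1)) := by
        rw [← hpolar.lintegral_comp hfpolar]
        refine lintegral_congr fun x => ?_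
        simp [smul_inv_smul₀ (norm_ne_zero_iff.2 x.2)]
    _ = _ := by
        rw [lintegral_prod _ hfpolar.aemeasurable]
        refine lintegral_congr fun ω => ?_
        exact (lintegral_withDensity_eq_lintegral_mul _
          (measurable_subtype_coe.pow_const _).ennreal_ofReal
          (hf.comp (measurable_subtype_coe.smul_const _))).trans
          (lintegral_subtype_comap measurableSet_Ioi
            fun t : ℝ => ENNReal.ofReal (t ^ _) * f (t • (ω : E)))

def hyperbolicPolar (p : ℝ × ℝ) : ℝ × ℝ := (p.2 * sinh p.1, p.2 * cosh p.1)

def fderivHyperbolicPolar (p : ℝ × ℝ) : ℝ × ℝ →L[ℝ] ℝ × ℝ :=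
  (Matrix.toLin (.finTwoProd ℝ) (.finTwoProd ℝ)
    !![p.2 * cosh p.1, sinh p.1; p.2 * sinh p.1, cosh p.1]).toContinuousLinearMap

theorem hasFDerivAt_hyperbolicPolar (p : ℝ × ℝ) :
    HasFDerivAt hyperbolicPolar (fderivHyperbolicPolar p) p := by
  unfold fderivHyperbolicPolar
  rw [Matrix.toLin_finTwoProd_toContinuousLinearMap]
  convert! HasFDerivAt.prodMk (𝕜 := ℝ)
      (hasFDerivAt_snd.mul ((hasDerivAt_sinh p.1).comp_hasFDerivAt p hasFDerivAt_fst))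
      (hasFDerivAt_snd.mul ((hasDerivAt_cosh p.1).comp_hasFDerivAt p hasFDerivAt_fst)) using 2 <;>
    simp [smul_smul, add_comm]

theorem det_fderivHyperbolicPolar (p : ℝ × ℝ) : (fderivHyperbolicPolar p).det = p.2 := by
  simp only [fderivHyperbolicPolar, ContinuousLinearMap.det, LinearMap.coe_toContinuousLinearMap,
    LinearMap.det_toLin, Matrix.det_fin_two_of]
  linear_combination p.2 * cosh_sq_sub_sinh_sq p.1

theorem injOn_hyperbolicPolar : InjOn hyperbolicPolar (univ ×ˢ Ioi 0) := by
  rintro ⟨r, s⟩ ⟨-, hs : 0 < s⟩ ⟨r', s'⟩ ⟨-, hs' : 0 < s'⟩ h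
  simp only [hyperbolicPolar, Prod.mk.injEq] at h
  obtain ⟨h₁, h₂⟩ := h
  have hsq : s ^ 2 = s' ^ 2 := by
    linear_combination (s * cosh r + s' * cosh r') * h₂ - (s * sinh r + s' * sinh r') * h₁
      - s ^ 2 * cosh_sq_sub_sinh_sq r + s' ^ 2 * cosh_sq_sub_sinh_sq r'
  obtain rfl : s = s' := (pow_left_inj₀ hs.le hs'.le two_ne_zero).1 hsq
  obtain rfl : r = r' := sinh_injective (mul_left_cancel₀ hs.ne' h₁)
  rfl

theorem image_hyperbolicPolar : hyperbolicPolar '' (univ ×ˢ Ioi 0) = {p | |p.1| < p.2} := by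
  ext ⟨a, b⟩
  constructor
  · rintro ⟨⟨r, s⟩, ⟨-, hs : 0 < s⟩, h⟩
    simp only [hyperbolicPolar, Prod.mk.injEq] at h
    obtain ⟨rfl, rfl⟩ := h
    have : |sinh r| < cosh r := by
      rw [abs_lt]
      constructor <;> nlinarith [cosh_sq_sub_sinh_sq r, cosh_pos r]
    simpa [abs_mul, abs_of_pos hs] using mul_lt_mul_of_pos_left this hs
  · intro (hab : |a| < b)
    have hb : 0 < b := (abs_nonneg a).trans_lt hab
    have hdisc : 0 < b ^ 2 - a ^ 2 := by nlinarith [sq_abs a, abs_nonneg a]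
    set s := √(b ^ 2 - a ^ 2)
    have hs : 0 < s := sqrt_pos.2 hdisc
    have hs2 : s ^ 2 = b ^ 2 - a ^ 2 := sq_sqrt hdisc.le
    refine ⟨(arsinh (a / s), s), ⟨trivial, hs⟩, ?_⟩
    simp only [hyperbolicPolar, sinh_arsinh, cosh_arsinh, Prod.mk.injEq]
    constructor
    · field_simp
    · have h : s ^ 2 * (1 + (a / s) ^ 2) = b ^ 2 := by field_simp; linear_combination hs2
      rw [← sqrt_sq hb.le, ← h, sqrt_mul (sq_nonneg s), sqrt_sq hs.le]

theorem setLIntegral_abs_lt_eq_lintegral_hyperbolicPolar {f : ℝ × ℝ → ℝ≥0∞} (hf : Measurable f) :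
    ∫⁻ p in {p : ℝ × ℝ | |p.1| < p.2}, f p =
      ∫⁻ r, ∫⁻ s in Ioi 0, ENNReal.ofReal s * f (hyperbolicPolar (r, s)) := by
  have hmeas : Measurable fun p => ENNReal.ofReal p.2 * f (hyperbolicPolar p) :=
    measurable_snd.ennreal_ofReal.mul (hf.comp (by unfold hyperbolicPolar; fun_prop))
  rw [← image_hyperbolicPolar, lintegral_image_eq_lintegral_abs_det_fderiv_mul volume
    (MeasurableSet.univ.prod measurableSet_Ioi)
    (fun p _ => (hasFDerivAt_hyperbolicPolar p).hasFDerivWithinAt) injOn_hyperbolicPolar,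
    setLIntegral_congr_fun (MeasurableSet.univ.prod measurableSet_Ioi)
      (g := fun p => ENNReal.ofReal p.2 * f (hyperbolicPolar p))
      (fun p ⟨_, (hp : 0 < p.2)⟩ => by rw [det_fderivHyperbolicPolar, abs_of_pos hp]),
    Measure.volume_eq_prod, setLIntegral_prod _ hmeas.aemeasurable, Measure.restrict_univ]

theorem setLIntegral_Ioc_zero_one_pow (n : ℕ) :
    ∫⁻ s in Ioc 0 1, ENNReal.ofReal (s ^ n) = ((n : ℝ≥0∞) + 1)⁻¹ := by
  rw [← ofReal_integral_eq_lintegral_ofReal (intervalIntegral.intervalIntegrable_pow n).1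
    ((ae_restrict_iff' measurableSet_Ioc).2 (.of_forall fun s hs => pow_nonneg hs.1.le n)),
    ← intervalIntegral.integral_of_le zero_le_one, integral_pow, one_pow,
    zero_pow n.succ_ne_zero, sub_zero, one_div, ENNReal.ofReal_inv_of_pos (by positivity),
    ENNReal.ofReal_add (by positivity) zero_le_one, ENNReal.ofReal_natCast, ENNReal.ofReal_one]

def minkForm (n : ℕ) : LinearMap.BilinForm ℝ (ℝ × EuclideanSpace ℝ (Fin n)) :=
  LinearMap.mk₂ ℝ minkB
    (fun x x' y => by simp only [minkB, Prod.fst_add, Prod.snd_add, inner_add_left]; ring)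
    (fun a x y => by
      simp only [minkB, Prod.smul_fst, Prod.smul_snd, real_inner_smul_left, smul_eq_mul]; ring)
    (fun x y y' => by simp only [minkB, Prod.fst_add, Prod.snd_add, inner_add_right]; ring)
    (fun a x y => by
      simp only [minkB, Prod.smul_fst, Prod.smul_snd, real_inner_smul_right, smul_eq_mul]; ring)

theorem minkForm_nondegenerate (n : ℕ) : (minkForm n).Nondegenerate := by
  refine .ofSeparatingLeft fun x hx => ?_
  have h := hx (-x.1, x.2)
  simp only [minkForm, LinearMap.mk₂_apply, minkB, real_inner_self_eq_norm_sq] at h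
  have h1 : x.1 = 0 := by nlinarith [sq_nonneg ‖x.2‖]
  have h2 : x.2 = 0 := by rw [← norm_eq_zero]; nlinarith [sq_nonneg x.1]
  exact Prod.ext h1 h2

section Minkowski

variable {n : ℕ}

theorem continuous_minkB_self : Continuous fun x : ℝ × EuclideanSpace ℝ (Fin n) => minkB x x := by
  unfold minkB; fun_prop

theorem minkB_smul_self (c : ℝ) (x : ℝ × EuclideanSpace ℝ (Fin n)) :
    minkB (c • x) (c • x) = c ^ 2 * minkB x x := by
  simp only [minkB, Prod.smul_fst, Prod.smul_snd, smul_eq_mul, real_inner_smul_left,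
    real_inner_smul_right]
  ring

theorem minkB_mk_smul_self (a t : ℝ) {ω : EuclideanSpace ℝ (Fin n)} (hω : ‖ω‖ = 1) :
    minkB (a, t • ω) (a, t • ω) = t ^ 2 - a ^ 2 := by
  simp only [minkB, real_inner_self_eq_norm_sq, norm_smul, hω, mul_one, norm_eq_abs, sq_abs]
  ring

theorem minkB_dSParam_self (p : ℝ × sphere (0 : EuclideanSpace ℝ (Fin n)) 1) :
    minkB (dSParam n p) (dSParam n p) = 1 := by
  rw [dSParam, minkB_mk_smul_self _ _ (norm_eq_of_mem_sphere p.2)]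
  linear_combination cosh_sq_sub_sinh_sq p.1

theorem measurable_dSParam : Measurable (dSParam n) := by
  apply Continuous.measurable; unfold dSParam; fun_prop

def dSProj (x : ℝ × EuclideanSpace ℝ (Fin n)) : ℝ × EuclideanSpace ℝ (Fin n) :=
  (√(minkB x x))⁻¹ • x

theorem measurable_dSProj : Measurable (dSProj (n := n)) :=
  (continuous_sqrt.comp continuous_minkB_self).measurable.inv.smul measurable_id

theorem dSProj_smul {u : ℝ × EuclideanSpace ℝ (Fin n)} (hu : minkB u u = 1) {s : ℝ} (hs : 0 < s) :
    dSProj (s • u) = u := by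
  rw [dSProj, minkB_smul_self, hu, mul_one, sqrt_sq hs.le, inv_smul_smul₀ hs.ne']

theorem dSProj_map {g : (ℝ × EuclideanSpace ℝ (Fin n)) →ₗ[ℝ] ℝ × EuclideanSpace ℝ (Fin n)}
    (hg : ∀ x y, minkB (g x) (g y) = minkB x y) (x : ℝ × EuclideanSpace ℝ (Fin n)) :
    dSProj (g x) = g (dSProj x) := by
  rw [dSProj, dSProj, hg, map_smul]

/-- For `A` inside de Sitter space, this is the cone `{s • u | u ∈ A, 0 < s ≤ 1}`. -/
def coneOver (A : Set (ℝ × EuclideanSpace ℝ (Fin n))) : Set (ℝ × EuclideanSpace ℝ (Fin n)) :=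
  {x | minkB x x ∈ Ioc 0 1 ∧ dSProj x ∈ A}

theorem measurableSet_coneOver {A : Set (ℝ × EuclideanSpace ℝ (Fin n))} (hA : MeasurableSet A) :
    MeasurableSet (coneOver A) :=
  (continuous_minkB_self.measurable measurableSet_Ioc).inter (measurable_dSProj hA)

theorem preimage_coneOver {g : (ℝ × EuclideanSpace ℝ (Fin n)) →ₗ[ℝ] ℝ × EuclideanSpace ℝ (Fin n)}
    (hg : ∀ x y, minkB (g x) (g y) = minkB x y) (A : Set (ℝ × EuclideanSpace ℝ (Fin n))) :
    g ⁻¹' coneOver A = coneOver (g ⁻¹' A) := by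
  ext x
  simp only [coneOver, mem_preimage, mem_ofPred_eq, hg, dSProj_map hg]

theorem smul_mem_coneOver_iff {A : Set (ℝ × EuclideanSpace ℝ (Fin n))}
    {u : ℝ × EuclideanSpace ℝ (Fin n)} (hu : minkB u u = 1) {s : ℝ} (hs : 0 < s) :
    s • u ∈ coneOver A ↔ s ∈ Ioc 0 1 ∧ u ∈ A := by
  simp only [coneOver, mem_ofPred_eq, minkB_smul_self, hu, mul_one, dSProj_smul hu hs, mem_Ioc,
    hs, true_and, sq_le_one_iff₀ hs.le, pow_pos hs]

theorem map_volume_of_minkB_isometry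
    {g : (ℝ × EuclideanSpace ℝ (Fin n)) →ₗ[ℝ] ℝ × EuclideanSpace ℝ (Fin n)}
    (hg : ∀ x y, minkB (g x) (g y) = minkB x y) : Measure.map g volume = volume := by
  rw [Measure.volume_eq_prod]
  exact Measure.map_linearMap_addHaar_of_det_sq_eq_one _
    ((minkForm_nondegenerate n).det_sq_eq_one hg)

theorem lintegral_wallMeasure {F : ℝ × EuclideanSpace ℝ (Fin n) → ℝ≥0∞}
    (hF : Measurable F) :
    ∫⁻ u, F u ∂wallMeasure n = ∫⁻ ω, ∫⁻ r, ENNReal.ofReal (cosh r ^ (n - 1)) *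
      F (dSParam n (r, ω)) ∂volume ∂(volume : Measure (EuclideanSpace ℝ (Fin n))).toSphere := by
  rw [wallMeasure, lintegral_map hF measurable_dSParam,
    lintegral_prod_symm (fun p => F (dSParam n p)) (hF.comp measurable_dSParam).aemeasurable]
  refine lintegral_congr fun ω => ?_
  exact lintegral_withDensity_eq_lintegral_mul _
    (continuous_cosh.measurable.pow_const _).ennreal_ofReal
    (hF.comp (measurable_dSParam.comp (measurable_id.prodMk measurable_const)))

theorem ae_minkB_self_eq_one_wallMeasure : ∀ᵐ u ∂wallMeasure n, minkB u u = 1 :=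
  (ae_map_iff measurable_dSParam.aemeasurable
    (measurableSet_eq_fun continuous_minkB_self.measurable measurable_const)).2
    (.of_forall minkB_dSParam_self)

theorem wallMeasure_zero : wallMeasure 0 = 0 := by
  rw [wallMeasure, (Measure.toSphere_eq_zero_iff _).2 inferInstance, Measure.prod_zero,
    Measure.map_zero]

theorem setLIntegral_spacelike_slice (hn : n ≠ 0)
    {f : ℝ × EuclideanSpace ℝ (Fin n) → ℝ≥0∞} (hf : Measurable f)
    (ω : sphere (0 : EuclideanSpace ℝ (Fin n)) 1) :
    ∫⁻ a, ∫⁻ t in Ioi 0, ENNReal.ofReal (t ^ (n - 1)) *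
        {x | 0 < minkB x x}.indicator f (a, t • (ω : EuclideanSpace ℝ (Fin n))) =
      ∫⁻ r, ENNReal.ofReal (cosh r ^ (n - 1)) *
        ∫⁻ s in Ioi 0, ENNReal.ofReal (s ^ n) * f (s • dSParam n (r, ω)) := by
  set G : ℝ × ℝ → ℝ≥0∞ := fun p => ENNReal.ofReal (p.2 ^ (n - 1)) * f (p.1, p.2 • (ω : _))
  have hG : Measurable G := (measurable_snd.pow_const _).ennreal_ofReal.mul
    (hf.comp (measurable_fst.prodMk (measurable_snd.smul_const _)))
  have hC : MeasurableSet {p : ℝ × ℝ | |p.1| < p.2} :=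
    measurableSet_lt measurable_fst.abs measurable_snd
  have hCsub : {p : ℝ × ℝ | |p.1| < p.2} ⊆ univ ×ˢ Ioi 0 :=
    fun p (hp : |p.1| < p.2) => ⟨trivial, (abs_nonneg _).trans_lt hp⟩
  calc _ = ∫⁻ a, ∫⁻ t in Ioi 0, {p : ℝ × ℝ | |p.1| < p.2}.indicator G (a, t) := by
        refine lintegral_congr fun a => setLIntegral_congr_fun measurableSet_Ioi fun t ht => ?_
        simp only [indicator, mem_ofPred_eq, minkB_mk_smul_self a t (norm_eq_of_mem_sphere ω),
          sub_pos, sq_lt_sq, abs_of_pos (show 0 < t from ht), G]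
        split_ifs <;> simp
    _ = ∫⁻ p in {p : ℝ × ℝ | |p.1| < p.2}, G p := by
        rw [← lintegral_indicator hC, ← setLIntegral_eq_of_support_subset
          ((support_indicator_subset).trans hCsub), Measure.volume_eq_prod,
          setLIntegral_prod _ (hG.indicator hC).aemeasurable, Measure.restrict_univ]
    _ = _ := by
        rw [setLIntegral_abs_lt_eq_lintegral_hyperbolicPolar hG]
        refine lintegral_congr fun r => ?_
        rw [← lintegral_const_mul' _ _ ENNReal.ofReal_ne_top]
        refine setLIntegral_congr_fun measurableSet_Ioi fun s (hs : 0 < s) => ?_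
        simp only [G, hyperbolicPolar, dSParam, Prod.smul_mk, smul_eq_mul, smul_smul, ← mul_assoc,
          ← ENNReal.ofReal_mul hs.le, ← ENNReal.ofReal_mul (pow_nonneg (cosh_pos r).le _)]
        obtain ⟨m, rfl⟩ := Nat.exists_eq_add_one_of_ne_zero hn
        congr 2
        simp only [Nat.add_sub_cancel]
        ring

theorem setLIntegral_spacelike_eq_lintegral_wallMeasure (hn : n ≠ 0)
    {f : ℝ × EuclideanSpace ℝ (Fin n) → ℝ≥0∞} (hf : Measurable f) :
    ∫⁻ x in {x | 0 < minkB x x}, f x =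
      ∫⁻ u, ∫⁻ s in Ioi 0, ENNReal.ofReal (s ^ n) * f (s • u) ∂volume ∂wallMeasure n := by
  have : Nontrivial (EuclideanSpace ℝ (Fin n)) :=
    Module.nontrivial_of_finrank_pos (R := ℝ) (by simpa using Nat.pos_of_ne_zero hn)
  set S := {x : ℝ × EuclideanSpace ℝ (Fin n) | 0 < minkB x x}
  have hS : MeasurableSet S := measurableSet_lt measurable_const continuous_minkB_self.measurable
  have hfS : Measurable (S.indicator f) := hf.indicator hS
  have hpolar : Measurable fun q : (ℝ × sphere (0 : EuclideanSpace ℝ (Fin n)) 1) × ℝ =>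
      ENNReal.ofReal (q.2 ^ (n - 1)) * S.indicator f (q.1.1, q.2 • (q.1.2 : _)) :=
    (measurable_snd.pow_const _).ennreal_ofReal.mul (hfS.comp (measurable_fst.fst.prodMk
      (measurable_snd.smul (measurable_subtype_coe.comp measurable_fst.snd))))
  calc ∫⁻ x in S, f x
      = ∫⁻ a, ∫⁻ v, S.indicator f (a, v) := by
        rw [← lintegral_indicator hS, Measure.volume_eq_prod, lintegral_prod _ hfS.aemeasurable]
    _ = ∫⁻ a, ∫⁻ ω, ∫⁻ t in Ioi 0, ENNReal.ofReal (t ^ (n - 1)) *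
          S.indicator f (a, t • (ω : EuclideanSpace ℝ (Fin n))) ∂volume
          ∂(volume : Measure (EuclideanSpace ℝ (Fin n))).toSphere := by
        refine lintegral_congr fun a => ?_
        rw [lintegral_eq_lintegral_toSphere_lintegral_Ioi _ (f := fun v => S.indicator f (a, v))
          (hfS.comp measurable_prodMk_left),
          finrank_euclideanSpace_fin]
    _ = ∫⁻ ω, ∫⁻ a, ∫⁻ t in Ioi 0, ENNReal.ofReal (t ^ (n - 1)) *
          S.indicator f (a, t • (ω : EuclideanSpace ℝ (Fin n)))
          ∂volume ∂volume ∂(volume : Measure (EuclideanSpace ℝ (Fin n))).toSphere :=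
        lintegral_lintegral_swap (hpolar.lintegral_prod_right').aemeasurable
    _ = _ := by
        have hF : Measurable fun u : ℝ × EuclideanSpace ℝ (Fin n) =>
            ∫⁻ s in Ioi 0, ENNReal.ofReal (s ^ n) * f (s • u) :=
          ((measurable_fst.pow_const n).ennreal_ofReal.mul
            (hf.comp (measurable_fst.smul measurable_snd))).lintegral_prod_left'
        rw [lintegral_wallMeasure hF]
        exact lintegral_congr (setLIntegral_spacelike_slice hn hf)

theorem setLIntegral_pow_mul_indicator_coneOver (A : Set (ℝ × EuclideanSpace ℝ (Fin n)))
    {u : ℝ × EuclideanSpace ℝ (Fin n)} (hu : minkB u u = 1) :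
    ∫⁻ s in Ioi 0, ENNReal.ofReal (s ^ n) * (coneOver A).indicator 1 (s • u) =
      ((n : ℝ≥0∞) + 1)⁻¹ * A.indicator 1 u := by
  calc _ = ∫⁻ s in Ioi 0, (Ioc 0 1).indicator (fun s => ENNReal.ofReal (s ^ n)) s *
        A.indicator 1 u := by
        refine setLIntegral_congr_fun measurableSet_Ioi fun s (hs : 0 < s) => ?_
        by_cases hs1 : s ∈ Ioc 0 1 <;> by_cases huA : u ∈ A <;>
          simp [smul_mem_coneOver_iff hu hs, hs1, huA]
    _ = _ := by
        rw [lintegral_mul_const _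
          ((Measurable.ennreal_ofReal (f := fun s : ℝ => s ^ n) (by fun_prop)).indicator
            measurableSet_Ioc),
          lintegral_indicator measurableSet_Ioc,
          Measure.restrict_restrict measurableSet_Ioc, inter_eq_left.2 Ioc_subset_Ioi_self,
          setLIntegral_Ioc_zero_one_pow]

theorem wallMeasure_apply (hn : n ≠ 0) {A : Set (ℝ × EuclideanSpace ℝ (Fin n))}
    (hA : MeasurableSet A) : wallMeasure n A = (n + 1) * volume (coneOver A) := by
  have hcone : coneOver A ⊆ {x | 0 < minkB x x} := fun x hx => hx.1.1
  calc wallMeasure n A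
      = (n + 1) * ∫⁻ u, ((n : ℝ≥0∞) + 1)⁻¹ * A.indicator 1 u ∂wallMeasure n := by
        rw [lintegral_const_mul _ (measurable_one.indicator hA), lintegral_indicator_one hA,
          ENNReal.mul_inv_cancel_left (by positivity) (by simp)]
    _ = (n + 1) * ∫⁻ u, ∫⁻ s in Ioi 0, ENNReal.ofReal (s ^ n) *
          (coneOver A).indicator 1 (s • u) ∂volume ∂wallMeasure n := by
        congr 1
        refine lintegral_congr_ae ?_
        filter_upwards [ae_minkB_self_eq_one_wallMeasure (n := n)] with u hu
        exact (setLIntegral_pow_mul_indicator_coneOver A hu).symm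
    _ = (n + 1) * volume (coneOver A) := by
        rw [← setLIntegral_spacelike_eq_lintegral_wallMeasure hn
            (measurable_one.indicator (measurableSet_coneOver hA)),
          setLIntegral_eq_of_support_subset (support_indicator_subset.trans hcone),
          lintegral_indicator_one (measurableSet_coneOver hA)]

end Minkowski

/-- The measure `μ` (the pushforward under `Φ(r,ω) = (sinh r, (cosh r)·ω)` of
`(cosh r)^{n-1} dr dω`) is invariant under every linear isometry of the Minkowski form. -/
theorem wallMeasure_lorentz_invariant (n : ℕ)
    (g : (ℝ × EuclideanSpace ℝ (Fin n)) →ₗ[ℝ] (ℝ × EuclideanSpace ℝ (Fin n)))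
    (hg : ∀ x y, minkB (g x) (g y) = minkB x y) :
    Measure.map g (wallMeasure n) = wallMeasure n := by
  rcases eq_or_ne n 0 with rfl | hn
  · rw [wallMeasure_zero, Measure.map_zero]
  have hgm : Measurable g := g.continuous_of_finiteDimensional.measurable
  ext A hA
  rw [Measure.map_apply hgm hA, wallMeasure_apply hn (hgm hA), wallMeasure_apply hn hA,
    ← preimage_coneOver hg, ← Measure.map_apply hgm (measurableSet_coneOver hA),
    map_volume_of_minkB_isometry hg]

end
end

section
/- If x, y, z ∈ Iⁿ and z lies on the geodesic between x and y, i.e., arcosh(-B(x,z)) + arcosh(-B(z,y)) = arcosh(-B(x,y)), then the separating-wall measure is additive: μ({u : B(x,u)·B(y,u) < 0}) = μ({u : B(x,u)·B(z,u) < 0}) + μ({u : B(z,u)·B(y,u) < 0}). -/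
open MeasureTheory Real Metric

noncomputable section

/-- The inverse hyperbolic cosine, `arcosh x = log (x + √(x² - 1))`. -/
def arcosh (x : ℝ) : ℝ := Real.log (x + Real.sqrt (x ^ 2 - 1))

/-! The geodesic condition makes `z` a positive combination of `x` and `y`: with
`a = d(x,z)` and `b = d(z,y)`, one has `sinh (a + b) • z = sinh b • x + sinh a • y`, because
the difference is lightlike and Minkowski-orthogonal to the timelike vector `x`, hence zero.
So `B(z,u)` is a positive combination of `B(x,u)` and `B(y,u)`: a wall separating `x` from `y`
separates exactly one of the pairs `(x,z)`, `(z,y)` unless it passes through `z`, and the walls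
through `z` form a `μ`-null set since each `ω`-slice of `Φ⁻¹{u | B(z,u) = 0}` is a single
point. -/

lemma arcosh_eq_real_arcosh : _root_.arcosh = Real.arcosh := rfl

section Minkowski

variable {n : ℕ}

lemma minkB_comm (x y : ℝ × EuclideanSpace ℝ (Fin n)) : minkB x y = minkB y x := by
  simp only [minkB, real_inner_comm, mul_comm]

lemma minkB_add_left (x x' y : ℝ × EuclideanSpace ℝ (Fin n)) :
    minkB (x + x') y = minkB x y + minkB x' y := by
  simp only [minkB, Prod.fst_add, Prod.snd_add, inner_add_left]; ring

lemma minkB_sub_left (x x' y : ℝ × EuclideanSpace ℝ (Fin n)) :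
    minkB (x - x') y = minkB x y - minkB x' y := by
  simp only [minkB, Prod.fst_sub, Prod.snd_sub, inner_sub_left]; ring

lemma minkB_smul_left (c : ℝ) (x y : ℝ × EuclideanSpace ℝ (Fin n)) :
    minkB (c • x) y = c * minkB x y := by
  simp only [minkB, Prod.smul_fst, Prod.smul_snd, smul_eq_mul, real_inner_smul_left]; ring

lemma continuous_minkB (v : ℝ × EuclideanSpace ℝ (Fin n)) : Continuous (minkB v) := by
  unfold minkB; fun_prop

lemma eq_zero_of_minkB_self_eq_zero {x w : ℝ × EuclideanSpace ℝ (Fin n)}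
    (hx : minkB x x < 0) (hxw : minkB x w = 0) (hw : minkB w w = 0) : w = 0 := by
  have hcs := real_inner_mul_inner_self_le x.2 w.2
  unfold minkB at hx hxw hw
  rw [show inner ℝ x.2 w.2 = x.1 * w.1 by linarith,
    show inner ℝ w.2 w.2 = w.1 * w.1 by linarith] at hcs
  have hw₁ : w.1 = 0 := by
    have : (x.1 * x.1 - inner ℝ x.2 x.2) * (w.1 * w.1) ≤ 0 := by linarith
    exact mul_self_eq_zero.mp
      (le_antisymm (nonpos_of_mul_nonpos_right this (by linarith)) (mul_self_nonneg _))
  have hw₂ : w.2 = 0 := (inner_self_eq_zero (𝕜 := ℝ)).mp (by rw [hw₁] at hw; linarith)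
  exact Prod.ext hw₁ hw₂

lemma eq_of_minkB_eq_neg_one {x z : ℝ × EuclideanSpace ℝ (Fin n)}
    (hx : minkB x x = -1) (hz : minkB z z = -1) (hxz : minkB x z = -1) : x = z := by
  have hzx : minkB z x = -1 := minkB_comm z x ▸ hxz
  refine sub_eq_zero.mp (eq_zero_of_minkB_self_eq_zero (x := x) (by linarith) ?_ ?_)
  · rw [minkB_comm, minkB_sub_left, hx, hzx]; ring
  · rw [minkB_sub_left, minkB_comm x, minkB_comm z, minkB_sub_left, minkB_sub_left,
      hx, hz, hxz, hzx]; ring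

lemma one_le_neg_minkB {x y : ℝ × EuclideanSpace ℝ (Fin n)}
    (hx : x ∈ hypI n) (hy : y ∈ hypI n) : 1 ≤ -minkB x y := by
  obtain ⟨hxB, hx₁⟩ := hx
  obtain ⟨hyB, hy₁⟩ := hy
  unfold minkB at *
  have hcs : inner ℝ x.2 y.2 ≤ ‖x.2‖ * ‖y.2‖ := real_inner_le_norm _ _
  rw [real_inner_self_eq_norm_sq] at hxB hyB
  have hsq : (1 + ‖x.2‖ * ‖y.2‖) ^ 2 ≤ (x.1 * y.1) ^ 2 := by
    nlinarith [sq_nonneg (‖x.2‖ - ‖y.2‖)]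
  have := abs_le_of_sq_le_sq' hsq (by positivity)
  linarith

lemma sinh_add_smul_eq_of_minkB {x y z : ℝ × EuclideanSpace ℝ (Fin n)} {a b : ℝ}
    (hx : minkB x x = -1) (hy : minkB y y = -1) (hz : minkB z z = -1)
    (hxz : minkB x z = -cosh a) (hzy : minkB z y = -cosh b) (hxy : minkB x y = -cosh (a + b)) :
    sinh (a + b) • z = sinh b • x + sinh a • y := by
  set w := sinh b • x + sinh a • y - sinh (a + b) • z
  have hw : ∀ v, minkB w v = sinh b * minkB x v + sinh a * minkB y v - sinh (a + b) * minkB z v :=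
    fun v ↦ by simp only [w, minkB_sub_left, minkB_add_left, minkB_smul_left]
  have hzx : minkB z x = -cosh a := minkB_comm z x ▸ hxz
  have hyz : minkB y z = -cosh b := minkB_comm y z ▸ hzy
  have hyx : minkB y x = -cosh (a + b) := minkB_comm y x ▸ hxy
  have hwx : minkB w x = 0 := by
    rw [hw, hx, hyx, hzx, sinh_add, cosh_add]
    linear_combination sinh b * cosh_sq_sub_sinh_sq a
  have hwy : minkB w y = 0 := by
    rw [hw, hy, hxy, hzy, sinh_add, cosh_add]
    linear_combination sinh a * cosh_sq_sub_sinh_sq b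
  have hwz : minkB w z = 0 := by
    rw [hw, hz, hxz, hyz, sinh_add]; ring
  have hww : minkB w w = 0 := by
    rw [hw, minkB_comm x, minkB_comm y, minkB_comm z, hwx, hwy, hwz]; ring
  have := eq_zero_of_minkB_self_eq_zero (x := x) (by linarith) (minkB_comm x w ▸ hwx) hww
  exact (sub_eq_zero.mp this).symm

lemma subsingleton_setOf_mul_sinh_eq_mul_cosh {a : ℝ} (ha : a ≠ 0) (b : ℝ) :
    {r : ℝ | a * sinh r = b * cosh r}.Subsingleton := by
  intro r₁ (h₁ : a * sinh r₁ = b * cosh r₁) r₂ (h₂ : a * sinh r₂ = b * cosh r₂)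
  have : a * sinh (r₁ - r₂) = 0 := by
    rw [sinh_sub]
    linear_combination cosh r₂ * h₁ - cosh r₁ * h₂
  have := sinh_eq_zero.mp ((mul_eq_zero.mp this).resolve_left ha)
  linarith

lemma minkB_dSParam (v : ℝ × EuclideanSpace ℝ (Fin n))
    (p : ℝ × sphere (0 : EuclideanSpace ℝ (Fin n)) 1) :
    minkB v (dSParam n p) = -(v.1 * sinh p.1) + cosh p.1 * inner ℝ v.2 (p.2 : _) := by
  simp only [minkB, dSParam, real_inner_smul_right]

lemma ae_wallMeasure_minkB_ne_zero {v : ℝ × EuclideanSpace ℝ (Fin n)} (hv : v.1 ≠ 0) :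
    ∀ᵐ u ∂wallMeasure n, minkB v u ≠ 0 := by
  have hmeas : MeasurableSet {u | minkB v u = 0} :=
    measurableSet_eq_fun (continuous_minkB v).measurable measurable_const
  have hΦ : Measurable (dSParam n) := by unfold dSParam; fun_prop
  simp only [ae_iff, not_not]
  rw [wallMeasure, Measure.map_apply hΦ hmeas, Measure.prod_apply_symm (hΦ hmeas)]
  refine (lintegral_congr fun ω ↦ ?_).trans lintegral_zero
  have hslice : {r | minkB v (dSParam n (r, ω)) = 0}.Subsingleton := by
    refine (subsingleton_setOf_mul_sinh_eq_mul_cosh hv (inner ℝ v.2 (ω : _))).anti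
      fun r (hr : minkB v (dSParam n (r, ω)) = 0) ↦ ?_
    rw [minkB_dSParam] at hr
    change v.1 * sinh r = _ * cosh r
    linarith
  exact withDensity_absolutelyContinuous _ _ (hslice.measure_zero volume)

end Minkowski

section PositiveCombination

variable {f g h p q s : ℝ}

lemma not_mul_neg_and_mul_neg_of_combination (hs : 0 < s) (hp : 0 ≤ p) (hq : 0 ≤ q)
    (hcomb : s * g = p * f + q * h) : ¬(f * g < 0 ∧ g * h < 0) := by
  rintro ⟨hfg, hgh⟩
  have hg : 0 < g * g := mul_self_pos.2 (right_ne_zero_of_mul hfg.ne)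
  have : s * (g * g) = p * (f * g) + q * (g * h) := by linear_combination g * hcomb
  nlinarith [mul_pos hs hg, mul_nonpos_of_nonneg_of_nonpos hp hfg.le,
    mul_nonpos_of_nonneg_of_nonpos hq hgh.le]

lemma mul_neg_iff_of_combination (hs : 0 < s) (hp : 0 ≤ p) (hq : 0 ≤ q) (hg : g ≠ 0)
    (hcomb : s * g = p * f + q * h) : f * h < 0 ↔ f * g < 0 ∨ g * h < 0 := by
  have hg2 : 0 < g * g := mul_self_pos.2 hg
  have key : s * (g * g) = p * (f * g) + q * (g * h) := by linear_combination g * hcomb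
  constructor
  · intro hfh
    by_contra! hcon
    nlinarith [mul_nonneg hcon.1 hcon.2, mul_neg_of_neg_of_pos hfh hg2]
  · rintro (hfg | hgh)
    · have hgh : 0 < g * h := by
        by_contra! hgh
        nlinarith [mul_pos hs hg2, mul_nonpos_of_nonneg_of_nonpos hp hfg.le,
          mul_nonpos_of_nonneg_of_nonpos hq hgh]
      nlinarith [mul_neg_of_neg_of_pos hfg hgh]
    · have hfg : 0 < f * g := by
        by_contra! hfg
        nlinarith [mul_pos hs hg2, mul_nonpos_of_nonneg_of_nonpos hp hfg,
          mul_nonpos_of_nonneg_of_nonpos hq hgh.le]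
      nlinarith [mul_neg_of_pos_of_neg hfg hgh]

end PositiveCombination

lemma measure_mul_neg_eq_add_of_combination {α : Type*} [MeasurableSpace α] {μ : Measure α}
    {f g h : α → ℝ} {p q s : ℝ} (hs : 0 < s) (hp : 0 ≤ p) (hq : 0 ≤ q)
    (hg_meas : Measurable g) (hh_meas : Measurable h) (hg : ∀ᵐ u ∂μ, g u ≠ 0)
    (hcomb : ∀ u, s * g u = p * f u + q * h u) :
    μ {u | f u * h u < 0} = μ {u | f u * g u < 0} + μ {u | g u * h u < 0} := by
  have hdisj : Disjoint {u | f u * g u < 0} {u | g u * h u < 0} := Set.disjoint_left.2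
    fun u hfg hgh ↦ not_mul_neg_and_mul_neg_of_combination hs hp hq (hcomb u) ⟨hfg, hgh⟩
  rw [← measure_union hdisj (measurableSet_lt (hg_meas.mul hh_meas) measurable_const)]
  refine measure_congr ?_
  filter_upwards [hg] with u hu
  exact propext (mul_neg_iff_of_combination hs hp hq hu (hcomb u))

/-- If `z` lies on the geodesic between `x` and `y` (distances add up), then
the separating-wall measure is additive:
`μ(sep(x,y)) = μ(sep(x,z)) + μ(sep(z,y))`. -/
theorem wallMeasure_separating_additive (n : ℕ)
    (x y z : ℝ × EuclideanSpace ℝ (Fin n))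
    (hx : x ∈ hypI n) (hy : y ∈ hypI n) (hz : z ∈ hypI n)
    (hgeo : _root_.arcosh (-(minkB x z)) + _root_.arcosh (-(minkB z y)) = _root_.arcosh (-(minkB x y))) :
    wallMeasure n {u : ℝ × EuclideanSpace ℝ (Fin n) | minkB x u * minkB y u < 0}
      = wallMeasure n {u : ℝ × EuclideanSpace ℝ (Fin n) | minkB x u * minkB z u < 0}
        + wallMeasure n {u : ℝ × EuclideanSpace ℝ (Fin n) | minkB z u * minkB y u < 0} := by
  rw [arcosh_eq_real_arcosh] at hgeo
  have hxz := one_le_neg_minkB hx hz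
  have hzy := one_le_neg_minkB hz hy
  set a := Real.arcosh (-minkB x z)
  set b := Real.arcosh (-minkB z y)
  obtain ha | ha := (arcosh_nonneg hxz).eq_or_lt
  · obtain rfl : x = z :=
      eq_of_minkB_eq_neg_one hx.1 hz.1 (by linarith [(arcosh_eq_zero_iff hxz).1 ha.symm])
    have hempty : {u | minkB x u * minkB x u < 0} = ∅ :=
      Set.eq_empty_of_forall_notMem fun u ↦ (mul_self_nonneg (minkB x u)).not_gt
    rw [hempty, measure_empty, zero_add]
  have hcomb : sinh (a + b) • z = sinh b • x + sinh a • y :=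
    sinh_add_smul_eq_of_minkB hx.1 hy.1 hz.1 (by rw [cosh_arcosh hxz]; ring)
      (by rw [cosh_arcosh hzy]; ring) (by rw [hgeo, cosh_arcosh (one_le_neg_minkB hx hy)]; ring)
  refine measure_mul_neg_eq_add_of_combination
    (sinh_pos_iff.2 (add_pos_of_pos_of_nonneg ha (arcosh_nonneg hzy)))
    (sinh_nonneg_iff.2 (arcosh_nonneg hzy)) (sinh_nonneg_iff.2 ha.le)
    (continuous_minkB z).measurable (continuous_minkB y).measurable
    (ae_wallMeasure_minkB_ne_zero hz.2.ne') fun u ↦ ?_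
  rw [← minkB_smul_left, hcomb, minkB_add_left, minkB_smul_left, minkB_smul_left]

end
end

section
/- The hyperbolic distance is a conditionally negative kernel on Iⁿ: for every n ≥ 2, every finite list of points x₁, …, x_m ∈ Iⁿ, and all real numbers λ₁, …, λ_m with ∑ᵢ λᵢ = 0, one has ∑ᵢ∑ⱼ λᵢλⱼ · arcosh(-B(xᵢ,xⱼ)) ≤ 0. -/
/-!
A vector `w` with `B(w,w) ≤ 1` is a wall, which separates `x` and `y` when `B(x,w)` and `B(y,w)`
have opposite signs. Let `ω(x,y)` be the Lebesgue measure of the set of walls separating `x` and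
`y`, i.e. of `H x ∆ H y` where `H x = {w | B(w,w) ≤ 1, B(x,w) < 0}`. Reflections in non-null
vectors preserve `B` and Lebesgue measure and move any pair of points of `Iⁿ` to a pair on a fixed
geodesic, so `ω(x,y)` only depends on `d(x,y)`. Along the geodesic the middle point of three is a
positive combination of the outer two, so no wall separates it from both, and `ω` is additive;
being nonnegative, it is `c · d` for a constant `0 < c < ∞`. Finally
`∑ λᵢ λⱼ μ(Aᵢ ∆ Aⱼ) = -2 ∑ λᵢ λⱼ μ(Aᵢ ∩ Aⱼ) ≤ 0` for sets `Aᵢ` of finite measure and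
`∑ λᵢ = 0`, because `μ(Aᵢ ∩ Aⱼ)` is the Gram matrix of the indicators of the `Aᵢ` in `L²`.
-/

open MeasureTheory Real Metric

noncomputable section

open scoped ENNReal symmDiff

lemma MeasureTheory.measure_symmDiff_eq_add_of_inter_subset_of_subset_union {α : Type*}
    [MeasurableSpace α] (μ : Measure α) {s t u : Set α} (ht : MeasurableSet t)
    (hu : MeasurableSet u) (hsu : s ∩ u ⊆ t) (hts : t ⊆ s ∪ u) :
    μ (s ∆ u) = μ (s ∆ t) + μ (t ∆ u) := by
  have key : ∀ w, (w ∈ s ∆ u ↔ w ∈ s ∆ t ∨ w ∈ t ∆ u) ∧ ¬(w ∈ s ∆ t ∧ w ∈ t ∆ u) := by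
    intro w
    have := @hsu w
    have := @hts w
    simp only [Set.mem_symmDiff, Set.mem_union, Set.mem_inter_iff] at *
    tauto
  have hunion : s ∆ u = s ∆ t ∪ t ∆ u := Set.ext fun w => (key w).1
  rw [hunion, measure_union (Set.disjoint_left.2 fun w h₁ h₂ => (key w).2 ⟨h₁, h₂⟩)
    (ht.symmDiff hu)]

lemma MeasureTheory.sum_mul_measureReal_symmDiff_nonpos {α ι : Type*} [MeasurableSpace α]
    [Fintype ι] (μ : Measure α) {s : ι → Set α} (hs : ∀ i, MeasurableSet (s i))
    (hμ : ∀ i, μ (s i) ≠ ∞) {c : ι → ℝ} (hc : ∑ i, c i = 0) :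
    ∑ i, ∑ j, c i * c j * μ.real (s i ∆ s j) ≤ 0 := by
  have hsymm : ∀ i j, μ.real (s i ∆ s j) =
      μ.real (s i) + μ.real (s j) - 2 * μ.real (s i ∩ s j) := fun i j => by
    rw [measureReal_symmDiff_eq (hs i) (hs j) (hμ i) (hμ j),
      ← measureReal_sdiff_add_inter (hs j) (hμ i), ← measureReal_sdiff_add_inter (hs i) (hμ j),
      Set.inter_comm]
    ring
  have hgram := (posSemidef_matrix_measure_inter hs hμ).dotProduct_mulVec_nonneg c
  simp only [star_trivial, dotProduct, Matrix.mulVec, Matrix.of_apply, Finset.mul_sum] at hgram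
  calc ∑ i, ∑ j, c i * c j * μ.real (s i ∆ s j)
      = (∑ i, c i * μ.real (s i)) * ∑ j, c j + (∑ i, c i) * ∑ j, c j * μ.real (s j)
        - 2 * ∑ i, ∑ j, c i * (μ.real (s i ∩ s j) * c j) := by
        simp only [hsymm, Finset.sum_mul, Finset.mul_sum, ← Finset.sum_sub_distrib,
          ← Finset.sum_add_distrib]
        refine Finset.sum_congr rfl fun i _ => Finset.sum_congr rfl fun j _ => ?_
        ring
    _ ≤ 0 := by
      rw [hc, mul_zero, zero_mul, add_zero, zero_sub]
      linarith

lemma eq_mul_apply_one_of_add_of_nonneg {φ : ℝ → ℝ} (hφ : ∀ t, 0 ≤ t → 0 ≤ φ t)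
    (hadd : ∀ a b, 0 ≤ a → 0 ≤ b → φ (a + b) = φ a + φ b) {t : ℝ} (ht : 0 ≤ t) :
    φ t = t * φ 1 := by
  have hnat : ∀ (k : ℕ) {s : ℝ}, 0 ≤ s → φ (k * s) = k * φ s := by
    intro k s hs
    induction k with
    | zero => simpa using hadd 0 0 le_rfl le_rfl
    | succ k ih =>
      rw [Nat.cast_succ, add_mul, one_mul, hadd _ _ (by positivity) hs, ih, add_mul, one_mul]
  have hmono : ∀ {a b : ℝ}, 0 ≤ a → a ≤ b → φ a ≤ φ b := fun {a b} ha hab => by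
    have h := hadd a (b - a) ha (sub_nonneg.2 hab)
    rw [add_sub_cancel] at h
    linarith [hφ _ (sub_nonneg.2 hab)]
  have hint : ∀ k : ℕ, φ k = k * φ 1 := fun k => by simpa using hnat k zero_le_one
  -- Squeezing `k * t` between consecutive integers.
  have hbound : ∀ k : ℕ, (k : ℝ) * |φ t - t * φ 1| ≤ φ 1 := by
    intro k
    have hkt : 0 ≤ (k : ℝ) * t := by positivity
    have hup : k * φ t ≤ (k * t + 1) * φ 1 := calc
      k * φ t = φ (k * t) := (hnat k ht).symm
      _ ≤ φ ⌈(k : ℝ) * t⌉₊ := hmono hkt (Nat.le_ceil _)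
      _ ≤ (k * t + 1) * φ 1 := by
        rw [hint]
        exact mul_le_mul_of_nonneg_right (Nat.ceil_lt_add_one hkt).le (hφ 1 zero_le_one)
    have hlow : (k * t - 1) * φ 1 ≤ k * φ t := calc
      (k * t - 1) * φ 1 ≤ φ ⌊(k : ℝ) * t⌋₊ := by
        rw [hint]
        refine mul_le_mul_of_nonneg_right ?_ (hφ 1 zero_le_one)
        linarith [Nat.lt_floor_add_one ((k : ℝ) * t)]
      _ ≤ φ (k * t) := hmono (Nat.cast_nonneg _) (Nat.floor_le hkt)
      _ = k * φ t := hnat k ht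
    rcases abs_cases (φ t - t * φ 1) with ⟨h, -⟩ | ⟨h, -⟩ <;> rw [h] <;> nlinarith
  by_contra hne
  have hpos : 0 < |φ t - t * φ 1| := abs_pos.2 (sub_ne_zero.2 hne)
  obtain ⟨k, hk⟩ := exists_nat_gt (φ 1 / |φ t - t * φ 1|)
  rw [div_lt_iff₀ hpos] at hk
  linarith [hbound k]

namespace Minkowski

abbrev Space (n : ℕ) := ℝ × EuclideanSpace ℝ (Fin n)

instance (n : ℕ) : (volume : Measure (Space n)).IsAddHaarMeasure :=
  Measure.prod.instIsAddHaarMeasure _ _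

variable {n : ℕ}

lemma minkB_comm (x y : Space n) : minkB x y = minkB y x := by
  simp only [minkB, real_inner_comm, mul_comm]

lemma minkB_self (x : Space n) : minkB x x = ‖x.2‖ ^ 2 - x.1 ^ 2 := by
  rw [minkB, real_inner_self_eq_norm_sq]
  ring

lemma minkB_add_left (x y z : Space n) : minkB (x + y) z = minkB x z + minkB y z := by
  simp only [minkB, Prod.fst_add, Prod.snd_add, inner_add_left]
  ring

lemma minkB_smul_left (c : ℝ) (x y : Space n) : minkB (c • x) y = c * minkB x y := by
  simp only [minkB, Prod.smul_fst, Prod.smul_snd, smul_eq_mul, real_inner_smul_left]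
  ring

def form (n : ℕ) : LinearMap.BilinForm ℝ (Space n) :=
  LinearMap.mk₂ ℝ minkB minkB_add_left minkB_smul_left
    (fun x y z => by rw [minkB_comm, minkB_add_left, minkB_comm y, minkB_comm z])
    (fun c x y => by rw [minkB_comm, minkB_smul_left, minkB_comm, smul_eq_mul])

lemma minkB_sub_left (x y z : Space n) : minkB (x - y) z = minkB x z - minkB y z :=
  LinearMap.map_sub₂ (form n) x y z

lemma minkB_add_right (x y z : Space n) : minkB x (y + z) = minkB x y + minkB x z :=
  map_add (form n x) y z

lemma minkB_sub_right (x y z : Space n) : minkB x (y - z) = minkB x y - minkB x z :=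
  map_sub (form n x) y z

lemma minkB_smul_right (c : ℝ) (x y : Space n) : minkB x (c • y) = c * minkB x y :=
  map_smul (form n x) c y

@[fun_prop]
lemma continuous_minkB {X : Type*} [TopologicalSpace X] {f g : X → Space n}
    (hf : Continuous f) (hg : Continuous g) : Continuous fun a => minkB (f a) (g a) := by
  unfold minkB
  fun_prop

def reflection (u : Space n) (hu : minkB u u ≠ 0) : Space n ≃ₗ[ℝ] Space n :=
  Module.reflection (x := u) (f := (2 / minkB u u) • form n u) (div_mul_cancel₀ 2 hu)

lemma reflection_apply {u : Space n} (hu : minkB u u ≠ 0) (w : Space n) :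
    reflection u hu w = w - (2 / minkB u u * minkB u w) • u :=
  Module.reflection_apply _ _

lemma minkB_reflection {u : Space n} (hu : minkB u u ≠ 0) (x y : Space n) :
    minkB (reflection u hu x) (reflection u hu y) = minkB x y := by
  simp only [reflection_apply, minkB_sub_left, minkB_sub_right, minkB_smul_left,
    minkB_smul_right, minkB_comm x u]
  field_simp
  ring

lemma reflection_apply_of_minkB_eq_zero {u w : Space n} (hu : minkB u u ≠ 0)
    (hw : minkB u w = 0) : reflection u hu w = w := by
  rw [reflection_apply, hw, mul_zero, zero_smul, sub_zero]

lemma reflection_sub_apply_left {a b : Space n} (hab : minkB a a = minkB b b)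
    (hu : minkB (a - b) (a - b) ≠ 0) : reflection (a - b) hu a = b := by
  have h : minkB (a - b) (a - b) = 2 * minkB (a - b) a := by
    simp only [minkB_sub_left, minkB_sub_right, minkB_comm b a] at hu ⊢
    linarith
  have h2 : minkB (a - b) a ≠ 0 := by simpa [h] using hu
  rw [reflection_apply, h, div_mul_cancel_left₀ two_ne_zero, inv_mul_cancel₀ h2, one_smul,
    sub_sub_cancel]

lemma abs_det_reflection {u : Space n} (hu : minkB u u ≠ 0) :
    |LinearMap.det (reflection u hu : Space n →ₗ[ℝ] Space n)| = 1 := by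
  set R : Space n →ₗ[ℝ] Space n := (reflection u hu).toLinearMap
  have hR : R ∘ₗ R = LinearMap.id := LinearMap.ext (Module.involutive_reflection _)
  have h := congrArg LinearMap.det hR
  rw [LinearMap.det_comp, LinearMap.det_id, ← abs_mul_abs_self, mul_self_eq_one_iff] at h
  exact h.resolve_right fun h' => by linarith [abs_nonneg (LinearMap.det R)]

lemma volume_preimage_reflection {u : Space n} (hu : minkB u u ≠ 0) (s : Set (Space n)) :
    volume (reflection u hu ⁻¹' s) = volume s := by
  rw [Measure.addHaar_preimage_linearEquiv]
  change ENNReal.ofReal |LinearMap.det (reflection u hu : Space n →ₗ[ℝ] Space n)| * _ = _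
  rw [abs_det_reflection, ENNReal.ofReal_one, one_mul]

lemma minkB_self_pos_of_minkB_eq_zero {x v : Space n} (hx : minkB x x < 0)
    (hxv : minkB x v = 0) (hv : v ≠ 0) : 0 < minkB v v := by
  rw [minkB_self] at hx ⊢
  have hinner : x.1 * v.1 = inner ℝ x.2 v.2 := by rw [minkB] at hxv; linarith
  have hcs : (x.1 * v.1) ^ 2 ≤ ‖x.2‖ ^ 2 * ‖v.2‖ ^ 2 := by
    rw [hinner, ← mul_pow]
    exact sq_le_sq' (neg_le_of_abs_le (abs_real_inner_le_norm _ _)) (real_inner_le_norm _ _)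
  have hv2 : v.2 ≠ 0 := by
    rintro hv2
    have hx1 : x.1 ≠ 0 := by rintro h; nlinarith [norm_nonneg x.2]
    have hv1 : v.1 = 0 := by simpa [hx1, hv2] using hinner
    exact hv (Prod.ext hv1 hv2)
  nlinarith [mul_pos (pow_pos (norm_pos_iff.2 hv2) 2) (sub_pos.2 hx)]

lemma one_le_neg_minkB {x y : Space n} (hx : x ∈ hypI n) (hy : y ∈ hypI n) :
    1 ≤ -minkB x y := by
  obtain ⟨hxx, hx1⟩ := hx
  obtain ⟨hyy, hy1⟩ := hy
  rw [minkB_self] at hxx hyy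
  have hprod : (1 + ‖x.2‖ * ‖y.2‖) ^ 2 ≤ (x.1 * y.1) ^ 2 := by
    nlinarith [sq_nonneg (‖x.2‖ - ‖y.2‖)]
  have := (pow_le_pow_iff_left₀ (by positivity) (by positivity) two_ne_zero).1 hprod
  rw [minkB]
  linarith [real_inner_le_norm x.2 y.2]

lemma exists_isometry_apply_eq {a b : Space n} (ha : a ∈ hypI n) (hb : b ∈ hypI n) :
    ∃ f : Space n → Space n, (∀ x y, minkB (f x) (f y) = minkB x y) ∧
      (∀ s, volume (f ⁻¹' s) = volume s) ∧ f a = b ∧ ∀ c, minkB (a - b) c = 0 → f c = c := by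
  by_cases hab : a = b
  · exact ⟨id, fun _ _ => rfl, fun _ => rfl, hab, fun _ _ => rfl⟩
  -- `a - b` is orthogonal to the timelike vector `a + b`, hence not null.
  have hu : minkB (a - b) (a - b) ≠ 0 := by
    refine (minkB_self_pos_of_minkB_eq_zero (x := a + b) ?_ ?_ (sub_ne_zero.2 hab)).ne'
    · simp only [minkB_add_left, minkB_add_right, ha.1, hb.1, minkB_comm b a]
      linarith [one_le_neg_minkB ha hb]
    · simp only [minkB_add_left, minkB_sub_right, ha.1, hb.1, minkB_comm b a]
      ring
  exact ⟨reflection (a - b) hu, minkB_reflection hu, volume_preimage_reflection hu,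
    reflection_sub_apply_left (ha.1.trans hb.1.symm) hu,
    fun c hc => reflection_apply_of_minkB_eq_zero hu hc⟩

def halfSpace (x : Space n) : Set (Space n) := {w | minkB w w ≤ 1 ∧ minkB x w < 0}

def wallDist (x y : Space n) : ℝ≥0∞ := volume (halfSpace x ∆ halfSpace y)

lemma measurableSet_halfSpace (x : Space n) : MeasurableSet (halfSpace x) :=
  (isClosed_le (f := fun w => minkB w w) (by fun_prop) continuous_const).measurableSet.inter
    (isOpen_lt (f := fun w => minkB x w) (by fun_prop) continuous_const).measurableSet

lemma halfSpace_smul {r : ℝ} (hr : 0 < r) (x : Space n) : halfSpace (r • x) = halfSpace x := by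
  ext w
  simp only [halfSpace, Set.mem_ofPred_eq, minkB_smul_left, mul_neg_iff, hr, true_and,
    hr.not_gt, false_and, or_false]

lemma inter_halfSpace_subset {a b : ℝ} (ha : 0 ≤ a) (hb : 0 ≤ b) (hab : 0 < a + b)
    (x z : Space n) : halfSpace x ∩ halfSpace z ⊆ halfSpace (a • x + b • z) := by
  rintro w ⟨⟨hw, hx⟩, -, hz⟩
  refine ⟨hw, ?_⟩
  rw [minkB_add_left, minkB_smul_left, minkB_smul_left]
  rcases le_total (minkB x w) (minkB z w) with h | h
  · nlinarith [mul_nonneg ha (sub_nonneg.2 h)]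
  · nlinarith [mul_nonneg hb (sub_nonneg.2 h)]

lemma halfSpace_subset_union {a b : ℝ} (ha : 0 ≤ a) (hb : 0 ≤ b) (x z : Space n) :
    halfSpace (a • x + b • z) ⊆ halfSpace x ∪ halfSpace z := by
  rintro w ⟨hw, hxz⟩
  rw [minkB_add_left, minkB_smul_left, minkB_smul_left] at hxz
  by_contra! h
  simp only [Set.mem_union, halfSpace, Set.mem_ofPred_eq, hw, true_and, not_or, not_lt] at h
  nlinarith [mul_nonneg ha h.1, mul_nonneg hb h.2]

lemma minkB_mul_minkB_nonpos_of_mem_symmDiff {x y w : Space n}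
    (hw : w ∈ halfSpace x ∆ halfSpace y) : minkB x w * minkB y w ≤ 0 := by
  rcases hw with ⟨⟨hww, hx⟩, hy⟩ | ⟨⟨hww, hy⟩, hx⟩
  · simp only [halfSpace, Set.mem_ofPred_eq, hww, true_and, not_lt] at hy
    exact mul_nonpos_of_nonpos_of_nonneg hx.le hy
  · simp only [halfSpace, Set.mem_ofPred_eq, hww, true_and, not_lt] at hx
    exact mul_nonpos_of_nonneg_of_nonpos hx hy.le

lemma wallDist_self (x : Space n) : wallDist x x = 0 := by
  rw [wallDist, symmDiff_self, Set.bot_eq_empty, measure_empty]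

lemma wallDist_apply_apply {f : Space n → Space n}
    (hf : ∀ x y, minkB (f x) (f y) = minkB x y) (hvol : ∀ s, volume (f ⁻¹' s) = volume s)
    (x y : Space n) : wallDist (f x) (f y) = wallDist x y := by
  have hpre : ∀ x, f ⁻¹' halfSpace (f x) = halfSpace x := fun x => by
    ext w
    simp only [halfSpace, Set.mem_preimage, Set.mem_ofPred_eq, hf]
  rw [wallDist, ← hvol, Set.preimage_symmDiff, hpre, hpre, wallDist]

section Geodesic

variable [NeZero n]

def geodesic (n : ℕ) [NeZero n] (t : ℝ) : Space n :=
  (cosh t, EuclideanSpace.single 0 (sinh t))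

lemma minkB_geodesic (t : ℝ) (w : Space n) :
    minkB (geodesic n t) w = sinh t * w.2 0 - cosh t * w.1 := by
  simp only [minkB, geodesic, EuclideanSpace.inner_single_left, ringHom_apply]
  ring

lemma minkB_geodesic_zero (w : Space n) : minkB (geodesic n 0) w = -w.1 := by
  rw [minkB_geodesic, sinh_zero, cosh_zero]
  ring

lemma minkB_geodesic_geodesic (s t : ℝ) :
    minkB (geodesic n s) (geodesic n t) = -cosh (t - s) := by
  rw [minkB_geodesic, cosh_sub]
  simp only [geodesic, PiLp.single_eq_same]
  ring

lemma geodesic_mem_hypI (t : ℝ) : geodesic n t ∈ hypI n :=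
  ⟨by rw [minkB_geodesic_geodesic, sub_self, cosh_zero], cosh_pos t⟩

lemma sinh_smul_geodesic (a b c : ℝ) :
    sinh (c - a) • geodesic n b = sinh (c - b) • geodesic n a + sinh (b - a) • geodesic n c := by
  ext i
  · simp only [geodesic, Prod.smul_fst, Prod.fst_add, smul_eq_mul, sinh_sub]
    ring
  · simp only [geodesic, Prod.smul_snd, Prod.snd_add, PiLp.add_apply, PiLp.smul_apply,
      PiLp.single_apply, smul_eq_mul, sinh_sub]
    split_ifs <;> ring

lemma wallDist_geodesic_add {a b c : ℝ} (hab : a ≤ b) (hbc : b ≤ c) :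
    wallDist (geodesic n a) (geodesic n c) =
      wallDist (geodesic n a) (geodesic n b) + wallDist (geodesic n b) (geodesic n c) := by
  rcases (hab.trans hbc).eq_or_lt with rfl | hac
  · obtain rfl : a = b := le_antisymm hab hbc
    simp only [wallDist_self, add_zero]
  have hα : 0 ≤ sinh (c - b) := sinh_nonneg_iff.2 (sub_nonneg.2 hbc)
  have hβ : 0 ≤ sinh (b - a) := sinh_nonneg_iff.2 (sub_nonneg.2 hab)
  have hαβ : 0 < sinh (c - b) + sinh (b - a) := by
    rcases hab.eq_or_lt with rfl | hab
    · linarith [sinh_pos_iff.2 (sub_pos.2 hac)]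
    · linarith [sinh_pos_iff.2 (sub_pos.2 hab)]
  have hb : halfSpace (geodesic n b) =
      halfSpace (sinh (c - b) • geodesic n a + sinh (b - a) • geodesic n c) := by
    rw [← sinh_smul_geodesic, halfSpace_smul (sinh_pos_iff.2 (sub_pos.2 hac))]
  exact measure_symmDiff_eq_add_of_inter_subset_of_subset_union volume
    (measurableSet_halfSpace _) (measurableSet_halfSpace _)
    (hb ▸ inter_halfSpace_subset hα hβ hαβ _ _) (hb ▸ halfSpace_subset_union hα hβ _ _)

lemma wallDist_eq_wallDist_geodesic {x y : Space n} (hx : x ∈ hypI n) (hy : y ∈ hypI n) :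
    wallDist x y = wallDist (geodesic n 0) (geodesic n (Real.arcosh (-minkB x y))) := by
  obtain ⟨f, hfB, hfvol, hfx, -⟩ := exists_isometry_apply_eq hx (geodesic_mem_hypI (n := n) 0)
  have hfy1 : (f y).1 = -minkB x y := by rw [← hfB, hfx, minkB_geodesic_zero, neg_neg]
  have hfy : f y ∈ hypI n :=
    ⟨by rw [hfB, hy.1], hfy1 ▸ one_pos.trans_le (one_le_neg_minkB hx hy)⟩
  obtain ⟨g, hgB, hgvol, hgy, hg⟩ := exists_isometry_apply_eq hfy
    (geodesic_mem_hypI (n := n) (Real.arcosh (-minkB x y)))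
  have hg0 : g (geodesic n 0) = geodesic n 0 := by
    refine hg _ ?_
    rw [minkB_comm, minkB_geodesic_zero, Prod.fst_sub, hfy1, geodesic,
      Real.cosh_arcosh (one_le_neg_minkB hx hy), sub_self, neg_zero]
  calc wallDist x y = wallDist (f x) (f y) := (wallDist_apply_apply hfB hfvol x y).symm
    _ = wallDist (g (geodesic n 0)) (g (f y)) := by rw [hfx, wallDist_apply_apply hgB hgvol]
    _ = _ := by rw [hg0, hgy]

lemma wallDist_geodesic_zero_add {a b : ℝ} (ha : 0 ≤ a) (hb : 0 ≤ b) :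
    wallDist (geodesic n 0) (geodesic n (a + b)) =
      wallDist (geodesic n 0) (geodesic n a) + wallDist (geodesic n 0) (geodesic n b) := by
  rw [wallDist_geodesic_add ha (le_add_of_nonneg_right hb),
    wallDist_eq_wallDist_geodesic (geodesic_mem_hypI a) (geodesic_mem_hypI (a + b)),
    minkB_geodesic_geodesic, neg_neg, add_sub_cancel_left, Real.arcosh_cosh hb]

lemma symmDiff_halfSpace_geodesic_subset_closedBall (t : ℝ) :
    halfSpace (geodesic n 0) ∆ halfSpace (geodesic n t) ⊆ closedBall 0 (cosh t) := by
  intro w hw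
  have hww : minkB w w ≤ 1 := hw.elim (fun h => h.1.1) (fun h => h.1.1)
  have hsep := minkB_mul_minkB_nonpos_of_mem_symmDiff hw
  rw [minkB_self] at hww
  rw [minkB_geodesic_zero, minkB_geodesic] at hsep
  have hw0 : |w.2 0| ≤ ‖w.2‖ := by simpa using PiLp.norm_apply_le w.2 0
  have hcosh : cosh t * |w.1| ≤ |sinh t| * ‖w.2‖ := by
    have h : |w.1| * (cosh t * |w.1|) ≤ |w.1| * (|sinh t| * ‖w.2‖) := calc
      _ = cosh t * w.1 ^ 2 := by rw [← sq_abs]; ring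
      _ ≤ sinh t * w.1 * w.2 0 := by linarith
      _ ≤ |sinh t| * |w.1| * |w.2 0| := by rw [← abs_mul, ← abs_mul]; exact le_abs_self _
      _ ≤ |sinh t| * |w.1| * ‖w.2‖ := by gcongr
      _ = _ := by ring
    rcases (abs_nonneg w.1).eq_or_lt with h0 | h0
    · rw [← h0, mul_zero]
      positivity
    · exact le_of_mul_le_mul_left h h0
  have h1 : w.1 ^ 2 ≤ sinh t ^ 2 := by
    have := pow_le_pow_left₀ (by positivity) hcosh 2
    rw [mul_pow, mul_pow, sq_abs, sq_abs, cosh_sq] at this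
    nlinarith
  have h2 : ‖w.2‖ ^ 2 ≤ cosh t ^ 2 := by nlinarith [cosh_sq t]
  rw [mem_closedBall_zero_iff, Prod.norm_def, max_le_iff, Real.norm_eq_abs]
  exact ⟨abs_le_of_sq_le_sq (by nlinarith [cosh_sq t]) (cosh_pos t).le,
    (pow_le_pow_iff_left₀ (norm_nonneg _) (cosh_pos t).le two_ne_zero).1 h2⟩

lemma wallDist_geodesic_zero_lt_top (t : ℝ) : wallDist (geodesic n 0) (geodesic n t) < ∞ :=
  (measure_mono (symmDiff_halfSpace_geodesic_subset_closedBall t)).trans_lt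
    (isCompact_closedBall _ _).measure_lt_top

lemma wallDist_lt_top {x y : Space n} (hx : x ∈ hypI n) (hy : y ∈ hypI n) :
    wallDist x y < ∞ := by
  rw [wallDist_eq_wallDist_geodesic hx hy]
  exact wallDist_geodesic_zero_lt_top _

lemma wallDist_geodesic_zero_one_pos : 0 < wallDist (geodesic n 0) (geodesic n 1) := by
  set O : Set (Space n) :=
    {w | minkB w w < 1 ∧ minkB (geodesic n 0) w < 0 ∧ 0 < minkB (geodesic n 1) w}
  have hO : IsOpen O :=
    (isOpen_lt (f := fun w => minkB w w) (by fun_prop) continuous_const).inter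
      ((isOpen_lt (f := fun w => minkB (geodesic n 0) w) (by fun_prop) continuous_const).inter
        (isOpen_lt continuous_const (g := fun w => minkB (geodesic n 1) w) (by fun_prop)))
  have hsub : O ⊆ halfSpace (geodesic n 0) ∆ halfSpace (geodesic n 1) :=
    fun w hw => Or.inl ⟨⟨hw.1.le, hw.2.1⟩, fun h => h.2.not_gt hw.2.2⟩
  -- Half the unit normal to the geodesic at `t = 1/2`: its pairing with `geodesic n t` is
  -- `sinh (t - 1/2) / 2`.
  set w₀ : Space n := (sinh (1 / 2) / 2, EuclideanSpace.single 0 (cosh (1 / 2) / 2))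
  have hw₀ : w₀ ∈ O := by
    have hsinh : 0 < sinh (1 / 2 : ℝ) := sinh_pos_iff.2 (by norm_num)
    refine ⟨?_, ?_, ?_⟩
    · rw [minkB_self]
      simp only [w₀, PiLp.norm_single, Real.norm_eq_abs, abs_div,
        abs_of_pos (cosh_pos _), abs_two]
      nlinarith [cosh_sq (1 / 2 : ℝ)]
    · rw [minkB_geodesic_zero]
      simp only [w₀]
      linarith
    · rw [minkB_geodesic]
      have h := sinh_sub 1 (1 / 2 : ℝ)
      norm_num at h
      simp only [w₀, PiLp.single_eq_same]
      linarith
  exact (hO.measure_pos volume ⟨w₀, hw₀⟩).trans_le (measure_mono hsub)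

lemma wallDist_toReal {x y : Space n} (hx : x ∈ hypI n) (hy : y ∈ hypI n) :
    (wallDist x y).toReal =
      Real.arcosh (-minkB x y) * (wallDist (geodesic n 0) (geodesic n 1)).toReal := by
  rw [wallDist_eq_wallDist_geodesic hx hy]
  refine eq_mul_apply_one_of_add_of_nonneg
    (φ := fun t => (wallDist (geodesic n 0) (geodesic n t)).toReal)
    (fun _ _ => ENNReal.toReal_nonneg) (fun a b ha hb => ?_)
    (Real.arcosh_nonneg (one_le_neg_minkB hx hy))
  rw [wallDist_geodesic_zero_add ha hb, ENNReal.toReal_add (wallDist_geodesic_zero_lt_top a).ne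
    (wallDist_geodesic_zero_lt_top b).ne]

end Geodesic

end Minkowski

/-- The hyperbolic distance `d(x,y) = arcosh(-B(x,y))` is a conditionally
negative kernel on `Iⁿ` for every `n ≥ 2`. -/
theorem hyperbolic_dist_conditionally_negative (n : ℕ) (hn : 2 ≤ n)
    (m : ℕ) (x : Fin m → ℝ × EuclideanSpace ℝ (Fin n)) (hx : ∀ i, x i ∈ hypI n)
    (lam : Fin m → ℝ) (hlam : ∑ i, lam i = 0) :
    ∑ i, ∑ j, lam i * lam j * _root_.arcosh (-(minkB (x i) (x j))) ≤ 0 := by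
  open Minkowski in
  · have : NeZero n := ⟨by omega⟩
    set κ := (wallDist (geodesic n 0) (geodesic n 1)).toReal
    have hκ : 0 < κ := ENNReal.toReal_pos wallDist_geodesic_zero_one_pos.ne'
      (wallDist_geodesic_zero_lt_top 1).ne
    -- Measuring the walls relative to a base point makes all the sets of finite measure.
    set s : Fin m → Set (Space n) := fun i => halfSpace (x i) ∆ halfSpace (geodesic n 0)
    have hs : ∀ i j, volume.real (s i ∆ s j) = _root_.arcosh (-minkB (x i) (x j)) * κ :=
      fun i j => by
        rw [symmDiff_symmDiff_symmDiff_comm, symmDiff_self, symmDiff_bot]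
        exact wallDist_toReal (hx i) (hx j)
    have h := sum_mul_measureReal_symmDiff_nonpos volume (s := s)
      (fun _ => (measurableSet_halfSpace _).symmDiff (measurableSet_halfSpace _))
      (fun i => (wallDist_lt_top (hx i) (geodesic_mem_hypI 0)).ne) hlam
    simp only [hs, ← mul_assoc, ← Finset.sum_mul] at h
    exact nonpos_of_mul_nonpos_left h hκ
end
end
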